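/- arXiv:math/0212047 — 2 statements merged into one kernel-verified Lean document; each statement's English description precedes it below -/
import Mathlib

section
/- In the Devil's exchange, every dollar bill eventually ends up permanently with the Devil: for every natural number n ≥ 1, bill number n is taken from the player at transaction n and is never returned at any later transaction; consequently the set of bills held by the player 'in the limit' (bills that the player holds from some transaction onward) is empty. -/
/-- The player's holdings after `n` transactions in the Devil's exchange:
`P 0` is the set of odd naturals; at transaction `n+1` the Devil takes bill
`n+1` and gives bills `4(n+1)-2` and `4(n+1)`. -/
def devilHoldings : ℕ → Set ℕ
  | 0 => {m | Odd m}
  | n + 1 => (devilHoldings n \ {n + 1}) ∪ {4 * (n + 1) - 2, 4 * (n + 1)}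

/-! Bill `m ≤ n` is gone after transaction `n`: either it was just taken, or it was gone before,
and every bill handed out at transaction `n` is at least `4n - 2 > n`. Bill `0` is never held. -/

theorem mem_devilHoldings_succ {m n : ℕ} :
    m ∈ devilHoldings (n + 1) ↔
      m ∈ devilHoldings n ∧ m ≠ n + 1 ∨ m = 4 * (n + 1) - 2 ∨ m = 4 * (n + 1) := by
  simp only [devilHoldings, Set.mem_union, Set.mem_sdiff, Set.mem_singleton_iff,
    Set.mem_insert_iff]

theorem notMem_devilHoldings_of_le {m n : ℕ} (h : m ≤ n) : m ∉ devilHoldings n := by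
  induction n with
  | zero =>
    obtain rfl : m = 0 := by omega
    simp [devilHoldings]
  | succ k ih =>
    rw [mem_devilHoldings_succ]
    rintro (⟨hm, hne⟩ | rfl | rfl)
    · exact ih (by omega) hm
    all_goals omega

/-- Every bill eventually ends up permanently with the Devil: bill `n ≥ 1`
is absent from the player's holdings from transaction `n` onward, and hence
the set of bills the player holds in the limit (liminf) is empty. -/
theorem devil_exchange_player_ends_with_nothing :
    (∀ n : ℕ, 1 ≤ n → ∀ m : ℕ, n ≤ m → n ∉ devilHoldings m) ∧
    {b : ℕ | ∃ N : ℕ, ∀ n : ℕ, N ≤ n → b ∈ devilHoldings n} = ∅ := by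
  refine ⟨fun n _ m => notMem_devilHoldings_of_le, ?_⟩
  refine Set.eq_empty_of_forall_notMem fun b ⟨N, hN⟩ => ?_
  exact notMem_devilHoldings_of_le (le_max_right N b) (hN _ (le_max_left N b))
end

section
/- If a family of countably many cells each eventually stabilizes or shows value 1 unboundedly often below ω₁, then there is a single countable ordinal stage after which the ω₁-limit behavior is already achieved: formally, for each n : ℕ let c_n : Ordinal → Bool, and suppose for each n either c_n stabilizes below ω₁ (there is β_n < ω₁ with c_n constant on [β_n, ω₁)) or {γ < ω₁ : c_n(γ) = true} is unbounded in ω₁. Then there exists a countable limit ordinal δ < ω₁ such that for every n, the limsup value of c_n at δ equals the limsup value of c_n at ω₁. -/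
open Ordinal

/-- The limsup value of a cell history `c` at a limit ordinal `l`: `true`
iff the stages below `l` showing `true` are unbounded in `l`. -/
def limsupVal (c : Ordinal → Bool) (l : Ordinal) : Prop :=
  ∀ β < l, ∃ γ, β ≤ γ ∧ γ < l ∧ c γ = true

/-- If each of countably many cells either stabilizes below `ω₁` or shows
value 1 unboundedly often below `ω₁`, then there is a single countable limit
ordinal `δ < ω₁` at which every cell already has its `ω₁`-limit value. -/
theorem countable_stage_achieves_omega1_limit (c : ℕ → Ordinal → Bool)
    (h : ∀ n : ℕ,
      (∃ β < (Cardinal.aleph 1).ord,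
        ∀ γ, β ≤ γ → γ < (Cardinal.aleph 1).ord → c n γ = c n β) ∨
      (∀ β < (Cardinal.aleph 1).ord,
        ∃ γ, β ≤ γ ∧ γ < (Cardinal.aleph 1).ord ∧ c n γ = true)) :
    ∃ δ : Ordinal, δ < (Cardinal.aleph 1).ord ∧ Order.IsSuccLimit δ ∧
      ∀ n : ℕ, (limsupVal (c n) δ ↔ limsupVal (c n) (Cardinal.aleph 1).ord) := by
  classical
  set Ω := (Cardinal.aleph 1).ord with hΩ
  have hreg : (Cardinal.aleph 1).IsRegular := Cardinal.isRegular_aleph_one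
  have hnat : Cardinal.lift.{_, 0} (Cardinal.mk ℕ) < Cardinal.aleph 1 := by
    simpa using Cardinal.aleph0_lt_aleph_one
  -- countable sups stay below Ω
  have hsup : ∀ f : ℕ → Ordinal, (∀ n, f n < Ω) → iSup f < Ω := by
    intro f hf
    simp only [hΩ] at hf ⊢
    exact Cardinal.iSup_lt_ord_lift_of_isRegular hreg hnat hf
  have hsucc : ∀ a, a < Ω → a + 1 < Ω := by
    intro a ha
    simp only [hΩ] at ha ⊢
    rw [Ordinal.add_one_eq_succ]
    exact (Cardinal.isSuccLimit_ord hreg.aleph0_le).succ_lt ha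
  -- stabilization bounds
  let β : ℕ → Ordinal := fun n =>
    if h' : ∃ β < Ω, ∀ γ, β ≤ γ → γ < Ω → c n γ = c n β then h'.choose else 0
  have hβΩ : ∀ n, β n < Ω := by
    intro n
    by_cases h' : ∃ β < Ω, ∀ γ, β ≤ γ → γ < Ω → c n γ = c n β
    · simpa [β, h'] using h'.choose_spec.1
    · simp only [β, dif_neg h']
      exact lt_of_le_of_lt zero_le
        (Cardinal.ord_lt_ord.mpr Cardinal.aleph0_lt_aleph_one)
  have hstab : ∀ n, (∃ β' < Ω, ∀ γ, β' ≤ γ → γ < Ω → c n γ = c n β') →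
      ∀ γ, β n ≤ γ → γ < Ω → c n γ = c n (β n) := by
    intro n h'
    have := h'.choose_spec.2
    simpa [β, h'] using this
  set B : Ordinal := iSup β with hB
  have hBΩ : B < Ω := hsup β hβΩ
  -- witnesses for unbounded cells
  let w : ℕ → Ordinal → Ordinal := fun n α =>
    if h' : ∃ γ, α ≤ γ ∧ γ < Ω ∧ c n γ = true then h'.choose else α
  have hw : ∀ n α, α ≤ w n α ∧ (α < Ω → w n α < Ω) ∧
      ((∃ γ, α ≤ γ ∧ γ < Ω ∧ c n γ = true) → c n (w n α) = true) := by
    intro n α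
    by_cases h' : ∃ γ, α ≤ γ ∧ γ < Ω ∧ c n γ = true
    · have := h'.choose_spec
      exact ⟨by simpa [w, h'] using this.1, fun _ => by simpa [w, h'] using this.2.1,
        fun _ => by simpa [w, h'] using this.2.2⟩
    · exact ⟨by simp [w, h'], fun hα => by simpa [w, h'], fun hc => absurd hc h'⟩
  -- one step of closing off
  let f : Ordinal → Ordinal := fun α => max (α + 1) (iSup fun n => w n α + 1)
  have hf_lt : ∀ α, α < Ω → f α < Ω := by
    intro α hα
    have h1 : α + 1 < Ω := hsucc α hα
    have h2 : iSup (fun n => w n α + 1) < Ω :=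
      hsup _ fun n => hsucc _ ((hw n α).2.1 hα)
    exact max_lt h1 h2
  have hf_gt : ∀ α, α < f α := by
    intro α
    have h1 : α < α + 1 := by rw [Ordinal.add_one_eq_succ]; exact Order.lt_succ α
    exact h1.trans_le (le_max_left _ _)
  have hf_w : ∀ n α, w n α < f α := by
    intro n α
    have h0 : w n α + 1 ≤ ⨆ m, w m α + 1 := Ordinal.le_iSup (fun m => w m α + 1) n
    have h1 : w n α < w n α + 1 := by rw [Ordinal.add_one_eq_succ]; exact Order.lt_succ _
    exact lt_of_lt_of_le h1 (h0.trans (le_max_right _ _))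
  -- the iteration
  let g : ℕ → Ordinal := fun k => f^[k] (B + 1)
  have hg_mono : ∀ k, g k < g (k + 1) := by
    intro k
    have : g (k + 1) = f (g k) := Function.iterate_succ_apply' f k (B + 1)
    rw [this]; exact hf_gt _
  have hgΩ : ∀ k, g k < Ω := by
    intro k
    induction k with
    | zero => exact hsucc _ hBΩ
    | succ k ih =>
        have : g (k + 1) = f (g k) := Function.iterate_succ_apply' f k (B + 1)
        rw [this]; exact hf_lt _ ih
  set δ : Ordinal := iSup g with hδ
  have hδΩ : δ < Ω := hsup g hgΩ
  have hgδ : ∀ k, g k < δ := fun k => lt_of_lt_of_le (hg_mono k) (Ordinal.le_iSup g (k + 1))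
  have hBδ : B < δ := by
    have h1 : B < B + 1 := by rw [Ordinal.add_one_eq_succ]; exact Order.lt_succ B
    exact lt_of_lt_of_le h1 (Ordinal.le_iSup g 0)
  have hlim : Order.IsSuccLimit δ := by
    constructor
    · exact not_isMin_iff.mpr ⟨_, hBδ⟩
    · rw [Order.isSuccPrelimit_iff_succ_lt]
      intro a ha
      rw [hδ] at ha
      obtain ⟨k, hk⟩ := Ordinal.lt_iSup_iff.mp ha
      exact lt_of_le_of_lt (Order.succ_le_of_lt hk) (hgδ k)
  refine ⟨δ, hδΩ, hlim, fun n => ?_⟩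
  rcases h n with hst | hub
  · -- stabilizing cell
    have hb := hstab n hst
    have hβn : β n ≤ B := Ordinal.le_iSup β n
    by_cases hv : c n (β n) = true
    · constructor
      · intro _ x hx
        refine ⟨max x (β n), le_max_left _ _, max_lt hx (lt_of_le_of_lt hβn hBΩ), ?_⟩
        rw [hb _ (le_max_right _ _) (max_lt hx (lt_of_le_of_lt hβn hBΩ))]
        exact hv
      · intro _ x hx
        have hm : max x (β n) < δ := max_lt hx (lt_of_le_of_lt hβn hBδ)
        refine ⟨max x (β n), le_max_left _ _, hm, ?_⟩
        rw [hb _ (le_max_right _ _) (hm.trans hδΩ)]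
        exact hv
    · constructor <;> intro hl
      · exfalso
        obtain ⟨γ, hγ1, hγ2, hγ3⟩ := hl (β n) (lt_of_le_of_lt hβn hBδ)
        exact hv ((hb γ hγ1 (hγ2.trans hδΩ)) ▸ hγ3)
      · exfalso
        obtain ⟨γ, hγ1, hγ2, hγ3⟩ := hl (β n) (lt_of_le_of_lt hβn hBΩ)
        exact hv ((hb γ hγ1 hγ2) ▸ hγ3)
  · -- unbounded cell: both sides true
    constructor <;> intro _
    · exact hub
    · intro x hx
      rw [hδ] at hx
      obtain ⟨k, hk⟩ := Ordinal.lt_iSup_iff.mp hx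
      have hwk := hw n (g k)
      have hcw : c n (w n (g k)) = true := hwk.2.2 (hub (g k) (hgΩ k))
      refine ⟨w n (g k), hk.le.trans hwk.1, ?_, hcw⟩
      have : w n (g k) < f (g k) := hf_w n (g k)
      have hgk : f (g k) = g (k + 1) := (Function.iterate_succ_apply' f k (B + 1)).symm
      exact lt_of_lt_of_le (hgk ▸ this) (Ordinal.le_iSup g (k + 1))
end
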